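/- arXiv:1101.2742 — 5 statements merged into one kernel-verified Lean document; each statement's English description precedes it below -/
import Mathlib

section
/- Let k be a field, V = k³, and let (x_i, f_i) for i = 1,2,3,4 be a generic configuration of flags: f_i(x_i) = 0, the points [x_i] are in general position (any three of x_i are linearly independent), and f_j(x_i) ≠ 0 for i ≠ j. For an even permutation (i,j,k,l) of (1,2,3,4), the cross-ratio z_ij of the four lines through x_i given by ker(f_i) and the lines (x_i x_j), (x_i x_k), (x_i x_l) (in the pencil of lines through x_i) equals f_i(x_k)·det(x_i,x_j,x_l) / (f_i(x_l)·det(x_i,x_j,x_k)). -/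
/-- The determinant of three vectors of `K³` w.r.t. the canonical basis. -/
def det3 {K : Type*} [Field K] (a b c : Fin 3 → K) : K :=
  Matrix.det (Matrix.of ![a, b, c])

/-- A generic configuration of (affine) flags `(xᵢ, fᵢ)`: each `fᵢ` vanishes on `xᵢ`,
the points are in general position (any three of the `xᵢ` are linearly independent),
and `f j (x i) ≠ 0` for `i ≠ j`. -/
structure IsGenericConfig {K : Type*} [Field K] {ι : Type*}
    (x : ι → Fin 3 → K) (f : ι → Module.Dual K (Fin 3 → K)) : Prop where
  flag : ∀ i, f i (x i) = 0
  pos : ∀ i j l, i ≠ j → i ≠ l → j ≠ l → det3 (x i) (x j) (x l) ≠ 0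
  nondeg : ∀ i j, i ≠ j → f j (x i) ≠ 0

/-- The edge coordinate `z_ij = f_i(x_k)·det(x_i,x_j,x_l) / (f_i(x_l)·det(x_i,x_j,x_k))`
of a tetrahedron of flags, for `(i,j,k,l)` an even permutation of the four vertices. -/
def zEdge {K : Type*} [Field K] (x : Fin 4 → Fin 3 → K)
    (f : Fin 4 → Module.Dual K (Fin 3 → K)) (i j k l : Fin 4) : K :=
  f i (x k) * det3 (x i) (x j) (x l) / (f i (x l) * det3 (x i) (x j) (x k))

/-- The triple ratio `z_ijk = f_i(x_j)f_j(x_k)f_k(x_i)/(f_i(x_k)f_j(x_i)f_k(x_j))`. -/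
def zFace {K : Type*} [Field K] {ι : Type*} (x : ι → Fin 3 → K)
    (f : ι → Module.Dual K (Fin 3 → K)) (i j k : ι) : K :=
  f i (x j) * f j (x k) * f k (x i) / (f i (x k) * f j (x i) * f k (x j))

/-!
The forms `det(x_i, x_k, ·)` and `det(x_i, x_l, ·)` vanish at `x_k` and `x_l` respectively, so in
the coordinates given by evaluation at `x_k` and `x_l` each `2 × 2` determinant of the cross-ratio
collapses to a single product times `det(x_i, x_k, x_l)`. By general position this common factor
is nonzero, and it cancels.
-/

lemma det3_self_right {K : Type*} [Field K] (a b : Fin 3 → K) : det3 a b b = 0 := by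
  simp only [det3]
  exact Matrix.det_zero_of_row_eq (i := 1) (j := 2) (by decide) rfl

lemma det3_swap_right {K : Type*} [Field K] (a b c : Fin 3 → K) :
    det3 a c b = -det3 a b c := by
  simp only [det3, Matrix.det_fin_three, Matrix.of_apply, Matrix.cons_val', Matrix.cons_val_fin_one,
    Matrix.cons_val_zero, Matrix.cons_val_one, Matrix.cons_val]
  ring

section DetAt

variable {α K : Type*} [Field K]

def detAt (a b : α) (g h : α → K) : K :=
  g a * h b - g b * h a

lemma detAt_crossRatio_eq (a b : α) (g h p q : α → K) (hpa : p a = 0) (hqb : q b = 0)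
    (hqa : q a = -p b) (hp : p b ≠ 0) :
    detAt a b g p * detAt a b h q / (detAt a b g q * detAt a b h p)
      = g a * h b / (g b * h a) := by
  simp only [detAt, hpa, hqb, hqa, mul_zero, mul_neg, sub_zero, zero_sub, neg_neg]
  calc g a * p b * (h b * p b) / (g b * p b * (h a * p b))
      = g a * h b * (p b * p b) / (g b * h a * (p b * p b)) := by ring
    _ = g a * h b / (g b * h a) := mul_div_mul_right _ _ (mul_ne_zero hp hp)

end DetAt

theorem crossRatio_pencil_eq_general {K : Type*} [Field K]
    (x : Fin 4 → Fin 3 → K) (f : Fin 4 → Module.Dual K (Fin 3 → K))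
    (hgen : IsGenericConfig x f)
    (σ : Equiv.Perm (Fin 4)) :
    let i := σ 0; let j := σ 1; let k := σ 2; let l := σ 3
    -- linear forms cutting out the lines (x_i x_j), (x_i x_k), (x_i x_l)
    let gj : (Fin 3 → K) → K := fun v => det3 (x i) (x j) v
    let gk : (Fin 3 → K) → K := fun v => det3 (x i) (x k) v
    let gl : (Fin 3 → K) → K := fun v => det3 (x i) (x l) v
    -- determinant of two forms in the coordinates (evaluation at x_k, evaluation at x_l)
    let d2 : ((Fin 3 → K) → K) → ((Fin 3 → K) → K) → K :=
      fun g h => g (x k) * h (x l) - g (x l) * h (x k)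
    -- cross-ratio [ker f_i, (x_i x_j); (x_i x_k), (x_i x_l)]
    (d2 (⇑(f i)) gk * d2 gj gl) / (d2 (⇑(f i)) gl * d2 gj gk)
      = f i (x k) * det3 (x i) (x j) (x l) / (f i (x l) * det3 (x i) (x j) (x k)) := by
  intro i j k l gj gk gl d2
  have hA : det3 (x i) (x k) (x l) ≠ 0 :=
    hgen.pos i k l (σ.injective.ne (by decide)) (σ.injective.ne (by decide))
      (σ.injective.ne (by decide))
  exact detAt_crossRatio_eq (x k) (x l) (f i) gj gk gl (det3_self_right _ _)
    (det3_self_right _ _) (det3_swap_right _ _ _) hA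

/-- The cross-ratio in the pencil of lines through `x_i` of the four lines
`ker f_i`, `(x_i x_j)`, `(x_i x_k)`, `(x_i x_l)` equals
`f_i(x_k)·det(x_i,x_j,x_l) / (f_i(x_l)·det(x_i,x_j,x_k))`.  The pencil of lines through
`x_i` is coordinatized by the 2-dimensional space of linear forms vanishing at `x_i`
(the line `(x_i x_m)` corresponding to the form `det(x_i, x_m, ·)`), and the cross-ratio
of four points of this projective line is computed in the coordinates given by
evaluation at `x_k` and `x_l`. -/
theorem crossRatio_pencil_eq {K : Type*} [Field K]
    (x : Fin 4 → Fin 3 → K) (f : Fin 4 → Module.Dual K (Fin 3 → K))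
    (hgen : IsGenericConfig x f)
    (σ : Equiv.Perm (Fin 4)) (hσ : Equiv.Perm.sign σ = 1) :
    let i := σ 0; let j := σ 1; let k := σ 2; let l := σ 3
    -- linear forms cutting out the lines (x_i x_j), (x_i x_k), (x_i x_l)
    let gj : (Fin 3 → K) → K := fun v => det3 (x i) (x j) v
    let gk : (Fin 3 → K) → K := fun v => det3 (x i) (x k) v
    let gl : (Fin 3 → K) → K := fun v => det3 (x i) (x l) v
    -- determinant of two forms in the coordinates (evaluation at x_k, evaluation at x_l)
    let d2 : ((Fin 3 → K) → K) → ((Fin 3 → K) → K) → K :=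
      fun g h => g (x k) * h (x l) - g (x l) * h (x k)
    -- cross-ratio [ker f_i, (x_i x_j); (x_i x_k), (x_i x_l)]
    (d2 (⇑(f i)) gk * d2 gj gl) / (d2 (⇑(f i)) gl * d2 gj gk)
      = f i (x k) * det3 (x i) (x j) (x l) / (f i (x l) * det3 (x i) (x j) (x k)) :=
  crossRatio_pencil_eq_general x f hgen σ
end

section
/- For a tetrahedron of flags with edge coordinates z_ij (defined via z_ij = f_i(x_k)det(x_i,x_j,x_l)/(f_i(x_l)det(x_i,x_j,x_k)) for (i,j,k,l) an even permutation of (1,2,3,4)) and face triple ratios z_ijk = f_i(x_j)f_j(x_k)f_k(x_i)/(f_i(x_k)f_j(x_i)f_k(x_j)), the relation z_ijk = −z_il · z_jl · z_kl holds for every even permutation (i,j,k,l) of (1,2,3,4). -/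
/-!
In the product `z_il · z_jl · z_kl` the linear-form factors assemble to the triple ratio `z_ijk`,
while the determinants give `∏ det(x_a, x_l, x_c) / det(x_a, x_l, x_b)` over the cyclic rotations
`(a, b, c)` of `(i, j, k)`. Swapping the outer arguments of each numerator turns it into one of
the denominators, so this factor is `(-1)³`.
-/

lemma det3_swap_outer {K : Type*} [Field K] (a b c : Fin 3 → K) :
    det3 c b a = -det3 a b c := by
  simp only [det3, Matrix.det_fin_three, Matrix.of_apply, Matrix.cons_val', Matrix.cons_val_fin_one,
    Matrix.cons_val_zero, Matrix.cons_val_one, Matrix.cons_val]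
  ring

theorem zEdge_mul_zEdge_mul_zEdge {K : Type*} [Field K] (x : Fin 4 → Fin 3 → K)
    (f : Fin 4 → Module.Dual K (Fin 3 → K)) {i j k l : Fin 4}
    (hij : det3 (x i) (x l) (x j) ≠ 0) (hjk : det3 (x j) (x l) (x k) ≠ 0)
    (hki : det3 (x k) (x l) (x i) ≠ 0) :
    zEdge x f i l j k * zEdge x f j l k i * zEdge x f k l i j = -zFace x f i j k := by
  have hsigns : det3 (x i) (x l) (x k) * det3 (x j) (x l) (x i) * det3 (x k) (x l) (x j) =
      -(det3 (x i) (x l) (x j) * det3 (x j) (x l) (x k) * det3 (x k) (x l) (x i)) := by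
    rw [det3_swap_outer (x k) (x l) (x i), det3_swap_outer (x i) (x l) (x j),
      det3_swap_outer (x j) (x l) (x k)]
    ring
  calc zEdge x f i l j k * zEdge x f j l k i * zEdge x f k l i j
      = zFace x f i j k *
          (det3 (x i) (x l) (x k) * det3 (x j) (x l) (x i) * det3 (x k) (x l) (x j) /
            (det3 (x i) (x l) (x j) * det3 (x j) (x l) (x k) * det3 (x k) (x l) (x i))) := by
        simp only [zEdge, zFace]
        ring
    _ = -zFace x f i j k := by
        rw [hsigns, neg_div, div_self (by simp [hij, hjk, hki]), mul_neg_one]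

theorem face_relation_general {K : Type*} [Field K]
    (x : Fin 4 → Fin 3 → K) (f : Fin 4 → Module.Dual K (Fin 3 → K))
    (hgen : IsGenericConfig x f)
    (σ : Equiv.Perm (Fin 4)) :
    let i := σ 0; let j := σ 1; let k := σ 2; let l := σ 3
    zFace x f i j k = -(zEdge x f i l j k * zEdge x f j l k i * zEdge x f k l i j) := by
  intro i j k l
  have hne : ∀ a b : Fin 4, a ≠ b → σ a ≠ σ b := fun _ _ h => σ.injective.ne h
  rw [zEdge_mul_zEdge_mul_zEdge x f
      (hgen.pos i l j (hne 0 3 (by decide)) (hne 0 1 (by decide)) (hne 3 1 (by decide)))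
      (hgen.pos j l k (hne 1 3 (by decide)) (hne 1 2 (by decide)) (hne 3 2 (by decide)))
      (hgen.pos k l i (hne 2 3 (by decide)) (hne 2 0 (by decide)) (hne 3 0 (by decide))),
    neg_neg]

/-- For a generic tetrahedron of flags and every even permutation `(i,j,k,l)` of the
vertices, the face triple ratio satisfies `z_ijk = −z_il·z_jl·z_kl`. -/
theorem face_relation {K : Type*} [Field K]
    (x : Fin 4 → Fin 3 → K) (f : Fin 4 → Module.Dual K (Fin 3 → K))
    (hgen : IsGenericConfig x f)
    (σ : Equiv.Perm (Fin 4)) (hσ : Equiv.Perm.sign σ = 1) :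
    let i := σ 0; let j := σ 1; let k := σ 2; let l := σ 3
    zFace x f i j k = -(zEdge x f i l j k * zEdge x f j l k i * zEdge x f k l i j) :=
  face_relation_general x f hgen σ
end

section
/- In the pre-Bloch group P(k), the map δ: P(k) → k^× ∧_ℤ k^×, defined on generators by δ([z]) = z ∧ (1−z), is well defined: for all x, y ∈ k∖{0,1} with x ≠ y, the five-term element [x] − [y] + [y/x] − [(1−x⁻¹)/(1−y⁻¹)] + [(1−x)/(1−y)] is mapped to 0 in k^× ∧_ℤ k^×. -/
open scoped Classical

/-- The wedge `a ∧ b` in the exterior square of a multiplicative abelian group `G`,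
realized inside the exterior algebra of `G` (written additively) over `ℤ`. -/
noncomputable def wedgeU {G : Type*} [CommGroup G] (a b : G) :
    ExteriorAlgebra ℤ (Additive G) :=
  ExteriorAlgebra.ι ℤ (Additive.ofMul a) * ExteriorAlgebra.ι ℤ (Additive.ofMul b)

/-- The wedge `a ∧ b ∈ K^× ∧_ℤ K^×` of two field elements (junk value `1` at `0`). -/
noncomputable def wedgeK {K : Type*} [Field K] (a b : K) :
    ExteriorAlgebra ℤ (Additive Kˣ) :=
  wedgeU (if h : a = 0 then 1 else Units.mk0 a h) (if h : b = 0 then 1 else Units.mk0 b h)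

/-!
The eight entries of the wedges in the five-term element are Laurent monomials in
`x`, `y`, `1 - x`, `1 - y` and `x - y` (e.g. `1 - y/x = (x - y)/x` and
`(1 - x⁻¹)/(1 - y⁻¹) = (1 - x)y / ((1 - y)x)`). Expanding the wedges bilinearly in these five
units, everything cancels by antisymmetry.
-/

open ExteriorAlgebra

lemma ExteriorAlgebra.ι_mul_ι_anticomm {R M : Type*} [CommRing R] [AddCommGroup M] [Module R M]
    (u v : M) : ι R v * ι R u = -(ι R u * ι R v) :=
  eq_neg_of_add_eq_zero_left (ι_add_mul_swap v u)

-- `a, b, c, d, e` play the roles of `x, y, 1 - x, 1 - y, x - y`.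
lemma wedgeU_five_term {G : Type*} [CommGroup G] (a b c d e : G) :
    wedgeU a c - wedgeU b d + wedgeU (b / a) (e / a) - wedgeU (c * b / (d * a)) (e / (d * a))
      + wedgeU (c / d) (e / d) = 0 := by
  simp only [wedgeU, ofMul_div, ofMul_mul, map_sub, map_add, mul_sub, sub_mul, mul_add, add_mul,
    ι_sq_zero, ι_mul_ι_anticomm (Additive.ofMul a) (Additive.ofMul c),
    ι_mul_ι_anticomm (Additive.ofMul a) (Additive.ofMul d)]
  abel

lemma wedgeK_coe_units {K : Type*} [Field K] (a b : Kˣ) : wedgeK (a : K) b = wedgeU a b := by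
  simp [wedgeK]

theorem delta_five_term_general {K : Type*} [Field K] (x y : K)
    (hx0 : x ≠ 0) (hx1 : x ≠ 1) (hy0 : y ≠ 0) (hy1 : y ≠ 1) (hxy : x ≠ y) :
    wedgeK x (1 - x) - wedgeK y (1 - y) + wedgeK (y / x) (1 - y / x)
      - wedgeK ((1 - x⁻¹) / (1 - y⁻¹)) (1 - (1 - x⁻¹) / (1 - y⁻¹))
      + wedgeK ((1 - x) / (1 - y)) (1 - (1 - x) / (1 - y)) = 0 := by
  have hx1' : 1 - x ≠ 0 := sub_ne_zero.2 hx1.symm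
  have hy1' : 1 - y ≠ 0 := sub_ne_zero.2 hy1.symm
  have hxy' : x - y ≠ 0 := sub_ne_zero.2 hxy
  have key := wedgeU_five_term (Units.mk0 x hx0) (Units.mk0 y hy0) (Units.mk0 _ hx1')
    (Units.mk0 _ hy1') (Units.mk0 _ hxy')
  simp only [← wedgeK_coe_units, Units.val_div_eq_div_val, Units.val_mul, Units.val_mk0] at key
  have h3 : 1 - y / x = (x - y) / x := by field_simp
  have h4 : (1 - x⁻¹) / (1 - y⁻¹) = (1 - x) * y / ((1 - y) * x) := by field_simp; ring
  have h4' : 1 - (1 - x) * y / ((1 - y) * x) = (x - y) / ((1 - y) * x) := by field_simp; ring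
  have h5 : 1 - (1 - x) / (1 - y) = (x - y) / (1 - y) := by field_simp; ring
  rwa [h3, h4, h4', h5]

/-- The map `δ : P(K) → K^× ∧_ℤ K^×`, `[z] ↦ z ∧ (1−z)`, kills the five-term relations:
for `x ≠ y` in `K ∖ {0,1}` with all five arguments in `K ∖ {0,1}`,
`δ([x] − [y] + [y/x] − [(1−x⁻¹)/(1−y⁻¹)] + [(1−x)/(1−y)]) = 0`. -/
theorem delta_five_term {K : Type*} [Field K] (x y : K)
    (hx0 : x ≠ 0) (hx1 : x ≠ 1) (hy0 : y ≠ 0) (hy1 : y ≠ 1) (hxy : x ≠ y)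
    (h30 : y / x ≠ 0) (h31 : y / x ≠ 1)
    (h40 : (1 - x⁻¹) / (1 - y⁻¹) ≠ 0) (h41 : (1 - x⁻¹) / (1 - y⁻¹) ≠ 1)
    (h50 : (1 - x) / (1 - y) ≠ 0) (h51 : (1 - x) / (1 - y) ≠ 1) :
    wedgeK x (1 - x) - wedgeK y (1 - y) + wedgeK (y / x) (1 - y / x)
      - wedgeK ((1 - x⁻¹) / (1 - y⁻¹)) (1 - (1 - x⁻¹) / (1 - y⁻¹))
      + wedgeK ((1 - x) / (1 - y)) (1 - (1 - x) / (1 - y)) = 0 :=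
  delta_five_term_general x y hx0 hx1 hy0 hy1 hxy
end

section
/- Let h₁: P¹(ℂ) → P²(ℂ) be the Veronese map [x:y] ↦ [x²:xy:y²] and, using the bilinear form ⟨,⟩ on ℂ³ associated to the quadratic form XZ − Y², let h(p) = (h₁(p), ⟨h₁(p),·⟩) ∈ Fl(ℂ). Then the tetrahedron of flags T with vertices h([0:1]), h([1:0]), h([1:1]), h([1:t]) for t ∈ ℂ∖{0,1} has edge coordinates z₁₂(T) = z₂₁(T) = z₃₄(T) = z₄₃(T) = t. -/
/-- The Veronese map `[x:y] ↦ [x²:xy:y²]` on homogeneous coordinates. -/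
def veronese (p : Fin 2 → ℂ) : Fin 3 → ℂ := ![p 0 ^ 2, p 0 * p 1, p 1 ^ 2]

/-- The linear form `⟨w, ·⟩` where `⟨,⟩` is the polarization of the quadratic form
`XZ − Y²` on `ℂ³`: `⟨w, v⟩ = (w₀v₂ + w₂v₀)/2 − w₁v₁`. -/
noncomputable def qDualForm (w : Fin 3 → ℂ) : Module.Dual ℂ (Fin 3 → ℂ) :=
  (w 2 / 2) • (LinearMap.proj 0 : (Fin 3 → ℂ) →ₗ[ℂ] ℂ)
    + (-(w 1)) • (LinearMap.proj 1 : (Fin 3 → ℂ) →ₗ[ℂ] ℂ)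
    + (w 0 / 2) • (LinearMap.proj 2 : (Fin 3 → ℂ) →ₗ[ℂ] ℂ)

/-!
Under the Veronese map, `⟨h₁(p), h₁(q)⟩ = det(p, q)² / 2` and `det(h₁(p), h₁(q), h₁(r))` is the
Vandermonde product `det(p, q) det(q, r) det(p, r)`. Substituting both into `z_ij` collapses it to
the cross-ratio `det(pᵢ, pₖ) det(pⱼ, pₗ) / (det(pᵢ, pₗ) det(pⱼ, pₖ))` of the four points of `P¹`,
and the cross-ratio of `0, ∞, 1, t` is `t` and invariant under double transpositions.
-/

def det2 {K : Type*} [CommRing K] (p q : Fin 2 → K) : K := p 0 * q 1 - p 1 * q 0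

def crossRatio {K : Type*} [Field K] (p q r s : Fin 2 → K) : K :=
  det2 p r * det2 q s / (det2 p s * det2 q r)

theorem qDualForm_veronese (p q : Fin 2 → ℂ) :
    qDualForm (veronese p) (veronese q) = det2 p q ^ 2 / 2 := by
  simp only [qDualForm, veronese, Fin.isValue, Matrix.cons_val, Matrix.cons_val_one,
    Matrix.cons_val_zero, neg_smul, LinearMap.add_apply, LinearMap.smul_apply, LinearMap.coe_proj,
    Function.eval, smul_eq_mul, LinearMap.neg_apply, det2]
  ring

theorem det3_veronese (p q r : Fin 2 → ℂ) :
    det3 (veronese p) (veronese q) (veronese r) = det2 p q * det2 q r * det2 p r := by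
  simp only [det3, veronese, Fin.isValue, Matrix.det_fin_three, Matrix.of_apply,
    Matrix.cons_val', Matrix.cons_val_zero, Matrix.cons_val_fin_one, Matrix.cons_val_one,
    Matrix.cons_val, det2]
  ring

theorem zEdge_veronese (p : Fin 4 → Fin 2 → ℂ) {i j k l : Fin 4}
    (hij : det2 (p i) (p j) ≠ 0) (hik : det2 (p i) (p k) ≠ 0) (hil : det2 (p i) (p l) ≠ 0)
    (hjk : det2 (p j) (p k) ≠ 0) :
    zEdge (fun a => veronese (p a)) (fun a => qDualForm (veronese (p a))) i j k l =
      crossRatio (p i) (p j) (p k) (p l) := by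
  rw [zEdge, crossRatio, qDualForm_veronese, qDualForm_veronese, det3_veronese, det3_veronese]
  field_simp

/-- The tetrahedron of flags obtained via the Veronese embedding from the ideal
hyperbolic tetrahedron with vertices `[0:1], [1:0], [1:1], [1:t]` has all four edge
coordinates `z₁₂ = z₂₁ = z₃₄ = z₄₃ = t`. -/
theorem hyperbolic_tetrahedron_coords (t : ℂ) (ht0 : t ≠ 0) (ht1 : t ≠ 1) :
    let pts : Fin 4 → Fin 2 → ℂ := ![![0,1], ![1,0], ![1,1], ![1,t]]
    let x : Fin 4 → Fin 3 → ℂ := fun i => veronese (pts i)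
    let f : Fin 4 → Module.Dual ℂ (Fin 3 → ℂ) := fun i => qDualForm (veronese (pts i))
    zEdge x f 0 1 2 3 = t ∧ zEdge x f 1 0 3 2 = t ∧
    zEdge x f 2 3 0 1 = t ∧ zEdge x f 3 2 1 0 = t := by
  intro pts x f
  have hpts : ∀ a b, a ≠ b → det2 (pts a) (pts b) ≠ 0 := by
    intro a b hab
    fin_cases a <;> fin_cases b <;> simp [pts, det2, ht0, sub_eq_zero, ht1, ht1.symm] at hab ⊢
  refine ⟨?_, ?_, ?_, ?_⟩ <;>
    rw [zEdge_veronese pts (hpts _ _ (by decide)) (hpts _ _ (by decide))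
      (hpts _ _ (by decide)) (hpts _ _ (by decide))] <;>
    simp [crossRatio, det2, pts]
end

section
/- Let ([x_i],[f_i]), i=1,2,3, be three generic flags in k³ with triple ratio X = f₁(x₂)f₂(x₃)f₃(x₁)/(f₁(x₃)f₂(x₁)f₃(x₂)). In the projective coordinate system where x₁ = [1:0:0], x₂ = [0:0:1], x₃ = [1:−1:1] and ker f₁ ∩ ker f₂ = [0:1:0], the line ker f₃ has dual coordinates [X : X+1 : 1]. -/
/-!
In these coordinates `f₁` vanishes at `[1:0:0]` and `[0:1:0]` and `f₂` at `[0:0:1]` and `[0:1:0]`,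
so evaluating at `x₃ = [1:−1:1]` gives `f₁(x₃) = f₁(x₂)` and `f₂(x₃) = f₂(x₁)`. These factors
cancel in the triple ratio, leaving `X = f₃(x₁)/f₃(x₂)`, the ratio of the first and last dual
coordinates of `ker f₃`; the middle one is then forced by `f₃(x₃) = 0`.
-/

section DualFin3

variable {K : Type*} [Field K]

lemma dual_fin3_apply (g : Module.Dual K (Fin 3 → K)) (v : Fin 3 → K) :
    g v = v 0 * g ![1, 0, 0] + v 1 * g ![0, 1, 0] + v 2 * g ![0, 0, 1] := by
  have hv : v = v 0 • (![1, 0, 0] : Fin 3 → K) + v 1 • ![0, 1, 0] + v 2 • ![0, 0, 1] := by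
    funext i; fin_cases i <;> simp
  conv_lhs => rw [hv]
  simp only [map_add, map_smul, smul_eq_mul]

lemma dual_apply_one_neg_one_one (g : Module.Dual K (Fin 3 → K)) :
    g ![1, -1, 1] = g ![1, 0, 0] - g ![0, 1, 0] + g ![0, 0, 1] := by
  rw [dual_fin3_apply g]
  simp only [Matrix.cons_val_zero, Matrix.cons_val_one, Matrix.cons_val_two, Matrix.head_cons,
    Matrix.tail_cons]
  ring

lemma dual_fin3_apply_of_apply_one_neg_one_one (g : Module.Dual K (Fin 3 → K))
    (hg : g ![1, -1, 1] = 0) (h2 : g ![0, 0, 1] ≠ 0) (v : Fin 3 → K) :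
    g v = g ![0, 0, 1] * (g ![1, 0, 0] / g ![0, 0, 1] * v 0 +
      (g ![1, 0, 0] / g ![0, 0, 1] + 1) * v 1 + v 2) := by
  have h1 : g ![0, 1, 0] = g ![1, 0, 0] + g ![0, 0, 1] := by
    rw [dual_apply_one_neg_one_one] at hg
    linear_combination -hg
  rw [dual_fin3_apply g v, h1]
  field_simp

end DualFin3

lemma zFace_eq_div_of_apply_eq {K : Type*} [Field K] {ι : Type*} (x : ι → Fin 3 → K)
    (f : ι → Module.Dual K (Fin 3 → K)) {i j k : ι}
    (hi : f i (x k) = f i (x j)) (hj : f j (x k) = f j (x i))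
    (hij : f i (x j) ≠ 0) (hji : f j (x i) ≠ 0) :
    zFace x f i j k = f k (x i) / f k (x j) := by
  rw [zFace, hi, hj]
  field_simp

/-- For three generic flags normalized so that `x₁ = [1:0:0]`, `x₂ = [0:0:1]`,
`x₃ = [1:−1:1]` and `ker f₁ ∩ ker f₂ = [0:1:0]`, the line `ker f₃` has dual
coordinates `[X : X+1 : 1]`, where `X` is the triple ratio. -/
theorem third_line_coordinates {K : Type*} [Field K]
    (x : Fin 3 → Fin 3 → K) (f : Fin 3 → Module.Dual K (Fin 3 → K))
    (hflag : ∀ i, f i (x i) = 0)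
    (hnz : ∀ i j : Fin 3, i ≠ j → f j (x i) ≠ 0)
    (hx0 : x 0 = ![1, 0, 0]) (hx1 : x 1 = ![0, 0, 1]) (hx2 : x 2 = ![1, -1, 1])
    (hker0 : f 0 ![0, 1, 0] = 0) (hker1 : f 1 ![0, 1, 0] = 0) :
    ∃ c : K, c ≠ 0 ∧ ∀ v : Fin 3 → K,
      f 2 v = c * (zFace x f 0 1 2 * v 0 + (zFace x f 0 1 2 + 1) * v 1 + v 2) := by
  have hf0 : f 0 (x 2) = f 0 (x 1) := by
    rw [hx2, hx1, dual_apply_one_neg_one_one, hker0, ← hx0, hflag]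
    ring
  have hf1 : f 1 (x 2) = f 1 (x 0) := by
    rw [hx2, hx0, dual_apply_one_neg_one_one, hker1, ← hx1, hflag]
    ring
  have hX : zFace x f 0 1 2 = f 2 ![1, 0, 0] / f 2 ![0, 0, 1] := by
    rw [zFace_eq_div_of_apply_eq x f hf0 hf1 (hnz 1 0 (by decide)) (hnz 0 1 (by decide)), hx0, hx1]
  have hf2 : f 2 ![0, 0, 1] ≠ 0 := hx1 ▸ hnz 1 2 (by decide)
  refine ⟨f 2 ![0, 0, 1], hf2, fun v => ?_⟩
  rw [hX]
  exact dual_fin3_apply_of_apply_one_neg_one_one (f 2) (hx2 ▸ hflag 2) hf2 v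
end
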